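/- (Schur concavity of Shannon entropy.) If p and q are probability vectors with p majorized by q, then H(p) ≥ H(q). -/
import Mathlib

open BigOperators

noncomputable section

/-- Sum of the `k` largest entries of a (nonnegative) vector, padding with zeros. -/
def kMaxSum {n : ℕ} (u : Fin n → ℝ) (k : ℕ) : ℝ :=
  sSup { r : ℝ | ∃ A : Finset (Fin n), A.card = min k n ∧ r = ∑ i ∈ A, u i }

/-- `MajorizedBy u v` means `u ≺ v`: every partial sum of the `k` largest entries of `u`
is at most that of `v`, and the total sums agree. -/
def MajorizedBy {m n : ℕ} (u : Fin m → ℝ) (v : Fin n → ℝ) : Prop :=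
  (∀ k : ℕ, kMaxSum u k ≤ kMaxSum v k) ∧ ∑ i, u i = ∑ i, v i

/-- Base-2 Shannon entropy of a finite vector. -/
def H2 {n : ℕ} (p : Fin n → ℝ) : ℝ := -∑ i, p i * Real.logb 2 (p i)

namespace SchurAux

open Finset

/-- zero-pad a `Fin n`-vector to a function on `ℕ`. -/
def padF {n : ℕ} (u : Fin n → ℝ) : ℕ → ℝ := fun i => if h : i < n then u ⟨i, h⟩ else 0

lemma padF_lt {n : ℕ} (u : Fin n → ℝ) {i : ℕ} (h : i < n) : padF u i = u ⟨i, h⟩ := dif_pos h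

lemma padF_ge {n : ℕ} (u : Fin n → ℝ) {i : ℕ} (h : n ≤ i) : padF u i = 0 :=
  dif_neg (not_lt.mpr h)

lemma padF_nonneg {n : ℕ} {u : Fin n → ℝ} (hu : ∀ i, 0 ≤ u i) (i : ℕ) : 0 ≤ padF u i := by
  unfold padF; split <;> simp [hu]

lemma sum_padF_comp {n N : ℕ} (hnN : n ≤ N) (u : Fin n → ℝ) (h : ℝ → ℝ) (h0 : h 0 = 0) :
    ∑ i ∈ Finset.range N, h (padF u i) = ∑ i : Fin n, h (u i) := by
  rw [← Finset.sum_subset (Finset.range_subset_range.mpr hnN)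
    (fun i _ hi => by rw [padF_ge u (by simpa using hi), h0])]
  rw [← Fin.sum_univ_eq_sum_range (fun i => h (padF u i)) n]
  refine Finset.sum_congr rfl fun i _ => ?_
  rw [padF_lt u i.isLt, Fin.eta]

lemma strictMono_val_le {t N : ℕ} {f : Fin t → Fin N} (hf : StrictMono f) (j : Fin t) :
    (j : ℕ) ≤ (f j : ℕ) := by
  induction' h : (j : ℕ) with i ih generalizing j
  · exact Nat.zero_le _
  · have hlt : i < t := by omega
    have h1 : (⟨i, hlt⟩ : Fin t) < j := by simp [Fin.lt_def, h]
    have h2 := hf h1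
    have h3 := ih ⟨i, hlt⟩ rfl
    simp only [Fin.lt_def] at h2
    omega

/-- partial sums of the padded vector are sums over initial-segment finsets. -/
lemma padsum {N : ℕ} (w : Fin N → ℝ) {k : ℕ} (hk : k ≤ N) :
    ∑ i ∈ Finset.range k, padF w i =
      ∑ j ∈ Finset.attachFin (Finset.range k)
        (fun m hm => lt_of_lt_of_le (Finset.mem_range.mp hm) hk), w j := by
  refine Finset.sum_bij' (fun a ha => (⟨a, lt_of_lt_of_le (Finset.mem_range.mp ha) hk⟩ : Fin N))
    (fun b _ => (b : ℕ)) ?_ ?_ ?_ ?_ ?_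
  · intro a ha; simp [Finset.mem_attachFin, Finset.mem_range.mp ha]
  · intro b hb; simp [Finset.mem_attachFin] at hb; simpa using hb
  · intro a ha; rfl
  · intro b hb; rfl
  · intro a ha; rw [padF_lt w (lt_of_lt_of_le (Finset.mem_range.mp ha) hk)]

/-- Sum over any finset of card ≤ k is at most the sum of the first k entries,
for an antitone nonneg vector. -/
lemma sum_le_sorted {N : ℕ} {w : Fin N → ℝ} (hw : Antitone w) (hw0 : ∀ j, 0 ≤ w j)
    {D : Finset (Fin N)} {k : ℕ} (hk : k ≤ N) (hD : D.card ≤ k) :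
    ∑ j ∈ D, w j ≤ ∑ i ∈ Finset.range k, padF w i := by
  set t := D.card with ht
  have htN : t ≤ N := le_trans hD hk
  have hmap : Finset.univ.map (D.orderEmbOfFin rfl).toEmbedding = D := by
    apply Finset.coe_injective
    rw [Finset.coe_map, Finset.coe_univ, Set.image_univ]
    exact Finset.range_orderEmbOfFin D rfl
  have h1 : ∑ j ∈ D, w j = ∑ j : Fin t, w (D.orderEmbOfFin rfl j) := by
    conv_lhs => rw [← hmap]
    rw [Finset.sum_map]; rfl
  have h2 : ∀ j : Fin t, w (D.orderEmbOfFin rfl j) ≤ padF w (j : ℕ) := by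
    intro j
    rw [padF_lt w (lt_of_lt_of_le j.isLt htN)]
    apply hw
    exact strictMono_val_le (D.orderEmbOfFin rfl).strictMono j
  calc ∑ j ∈ D, w j ≤ ∑ j : Fin t, padF w (j : ℕ) := by
        rw [h1]; exact Finset.sum_le_sum fun j _ => h2 j
    _ = ∑ i ∈ Finset.range t, padF w i := Fin.sum_univ_eq_sum_range _ t
    _ ≤ ∑ i ∈ Finset.range k, padF w i := by
        apply Finset.sum_le_sum_of_subset_of_nonneg (Finset.range_subset_range.mpr hD)
        intro i _ _; exact padF_nonneg hw0 i

lemma bddAbove_kset {n : ℕ} (u : Fin n → ℝ) (k : ℕ) :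
    BddAbove { r : ℝ | ∃ A : Finset (Fin n), A.card = min k n ∧ r = ∑ i ∈ A, u i } := by
  apply Set.Finite.bddAbove
  apply Set.Finite.subset (Set.finite_range (fun A : Finset (Fin n) => ∑ i ∈ A, u i))
  rintro r ⟨A, -, rfl⟩
  exact ⟨A, rfl⟩

lemma le_kMaxSum {n : ℕ} (u : Fin n → ℝ) (k : ℕ) {A : Finset (Fin n)}
    (hA : A.card = min k n) : ∑ i ∈ A, u i ≤ kMaxSum u k :=
  le_csSup (bddAbove_kset u k) ⟨A, hA, rfl⟩

lemma kMaxSum_le {n : ℕ} (u : Fin n → ℝ) (k : ℕ) {x : ℝ}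
    (hx : ∀ A : Finset (Fin n), A.card = min k n → ∑ i ∈ A, u i ≤ x) :
    kMaxSum u k ≤ x := by
  obtain ⟨A₀, -, hA₀⟩ := Finset.exists_subset_card_eq
    (show min k n ≤ (Finset.univ : Finset (Fin n)).card by
      simp [Finset.card_univ])
  exact csSup_le ⟨_, A₀, hA₀, rfl⟩ (by rintro r ⟨A, hA, rfl⟩; exact hx A hA)

/-- The main construction: a sorted padded version of a nonneg vector. -/
lemma exists_good {n N : ℕ} (hnN : n ≤ N) (u : Fin n → ℝ) (hu0 : ∀ i, 0 ≤ u i) :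
    ∃ a : ℕ → ℝ, Antitone a ∧ (∀ i, 0 ≤ a i) ∧ (∀ i, N ≤ i → a i = 0) ∧
      (∀ h : ℝ → ℝ, h 0 = 0 → ∑ i ∈ Finset.range N, h (a i) = ∑ i : Fin n, h (u i)) ∧
      (∀ k, k ≤ N → ∑ i ∈ Finset.range k, a i = kMaxSum u k) := by
  classical
  set s : Fin N → ℝ := fun j => padF u (j : ℕ) with hs
  have hs0 : ∀ j, 0 ≤ s j := fun j => padF_nonneg hu0 _
  set σ : Equiv.Perm (Fin N) := Tuple.sort (fun j => -s j) with hσ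
  have hanti : Antitone (s ∘ σ) := by
    intro i j hij
    have := Tuple.monotone_sort (fun j => -s j) hij
    simp only [Function.comp_apply] at this ⊢
    linarith
  set a : ℕ → ℝ := padF (s ∘ σ) with ha
  have ha0 : ∀ i, 0 ≤ a i := padF_nonneg (fun j => hs0 (σ j))
  have haN : ∀ i, N ≤ i → a i = 0 := fun i hi => padF_ge _ hi
  have hAa : Antitone a := by
    intro i j hij
    rcases le_or_gt N j with hN | hN
    · rw [haN j hN]; exact ha0 i
    · have hiN : i < N := lt_of_le_of_lt hij hN
      rw [ha, padF_lt _ hiN, padF_lt _ hN]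
      exact hanti (by exact_mod_cast hij)
  have hsum : ∀ h : ℝ → ℝ, h 0 = 0 →
      ∑ i ∈ Finset.range N, h (a i) = ∑ i : Fin n, h (u i) := by
    intro h h0
    rw [ha, sum_padF_comp le_rfl (s ∘ σ) h h0]
    simp only [Function.comp_apply]
    rw [Equiv.sum_comp σ (fun j => h (s j))]
    rw [← sum_padF_comp hnN u h h0, ← Fin.sum_univ_eq_sum_range (fun i => h (padF u i)) N]
  set e : Fin n ↪ Fin N := Fin.castLEEmb hnN with he
  have hse : ∀ i : Fin n, s (e i) = u i := by
    intro i
    show padF u ((i : ℕ)) = u i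
    rw [padF_lt u i.isLt, Fin.eta]
  refine ⟨a, hAa, ha0, haN, hsum, ?_⟩
  intro k hk
  apply le_antisymm
  · -- partial sum ≤ kMaxSum
    set Tk : Finset (Fin N) := Finset.attachFin (Finset.range k)
      (fun m hm => lt_of_lt_of_le (Finset.mem_range.mp hm) hk) with hTk
    rw [ha, padsum (s ∘ σ) hk, ← hTk]
    set B := Tk.map σ.toEmbedding with hB
    have hBcard : B.card = k := by
      rw [hB, Finset.card_map, hTk, Finset.card_attachFin, Finset.card_range]
    have hsum1 : ∑ j ∈ Tk, (s ∘ σ) j = ∑ j ∈ B, s j := by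
      rw [hB, Finset.sum_map]; rfl
    set Bf := B.filter (fun j : Fin N => (j : ℕ) < n) with hBf
    have hsum2 : ∑ j ∈ B, s j = ∑ j ∈ Bf, s j := by
      refine (Finset.sum_subset (Finset.filter_subset _ _) ?_).symm
      intro x hx hnx
      have : ¬ ((x : ℕ) < n) := by
        intro hlt; exact hnx (Finset.mem_filter.mpr ⟨hx, hlt⟩)
      exact padF_ge u (not_lt.mp this)
    set C := Finset.univ.filter (fun i : Fin n => e i ∈ B) with hC
    have hmemB : ∀ (j : Fin N) (hj : (j : ℕ) < n), e ⟨(j : ℕ), hj⟩ = j := by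
      intro j hj; apply Fin.ext; rfl
    have hsum3 : ∑ j ∈ Bf, s j = ∑ i ∈ C, u i := by
      refine Finset.sum_bij' (fun j hj => (⟨(j : ℕ), (Finset.mem_filter.mp hj).2⟩ : Fin n))
        (fun i _ => e i) ?_ ?_ ?_ ?_ ?_
      · intro j hj
        rw [hC]
        refine Finset.mem_filter.mpr ⟨Finset.mem_univ _, ?_⟩
        rw [hmemB j (Finset.mem_filter.mp hj).2]
        exact (Finset.mem_filter.mp hj).1
      · intro i hi
        rw [hBf]
        refine Finset.mem_filter.mpr ⟨(Finset.mem_filter.mp hi).2, i.isLt⟩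
      · intro j hj; exact hmemB j (Finset.mem_filter.mp hj).2
      · intro i hi; apply Fin.ext; rfl
      · intro j hj
        have := (Finset.mem_filter.mp hj).2
        show s j = u _
        exact (padF_lt u this)
    have hCcard : C.card ≤ min k n := by
      have h1 : C.card = Bf.card := by
        refine (Finset.card_bij' (fun i (_ : i ∈ C) => e i)
          (fun j hj => (⟨(j : ℕ), (Finset.mem_filter.mp hj).2⟩ : Fin n)) ?_ ?_ ?_ ?_)
        · intro i hi
          exact Finset.mem_filter.mpr ⟨(Finset.mem_filter.mp hi).2, i.isLt⟩
        · intro j hj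
          refine Finset.mem_filter.mpr ⟨Finset.mem_univ _, ?_⟩
          rw [hmemB j (Finset.mem_filter.mp hj).2]
          exact (Finset.mem_filter.mp hj).1
        · intro i hi; apply Fin.ext; rfl
        · intro j hj; exact hmemB j (Finset.mem_filter.mp hj).2
      refine le_min ?_ ?_
      · rw [h1]
        exact le_trans (Finset.card_filter_le B _) (le_of_eq hBcard)
      · calc C.card ≤ (Finset.univ : Finset (Fin n)).card := Finset.card_le_card (Finset.subset_univ C)
          _ = n := by simp
    obtain ⟨C', hCC', _, hC'⟩ := Finset.exists_subsuperset_card_eq (Finset.subset_univ C) hCcard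
      (by simp [min_le_right])
    calc ∑ j ∈ Tk, (s ∘ σ) j = ∑ i ∈ C, u i := by rw [hsum1, hsum2, hsum3]
      _ ≤ ∑ i ∈ C', u i :=
        Finset.sum_le_sum_of_subset_of_nonneg hCC' (fun i _ _ => hu0 i)
      _ ≤ kMaxSum u k := le_kMaxSum u k hC'
  · -- kMaxSum ≤ partial sum
    apply kMaxSum_le
    intro A hA
    have h1 : ∑ i ∈ A, u i = ∑ j ∈ A.map e, s j := by
      rw [Finset.sum_map]
      exact Finset.sum_congr rfl (fun i _ => (hse i).symm)
    set D := (A.map e).map σ.symm.toEmbedding with hD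
    have h2 : ∑ j ∈ A.map e, s j = ∑ j ∈ D, (s ∘ σ) j := by
      refine (Finset.sum_equiv σ ?_ ?_).symm
      · intro i
        rw [hD]
        simp [Finset.mem_map_equiv]
      · intro i _; rfl
    have hDcard : D.card = min k n := by
      rw [hD, Finset.card_map, Finset.card_map, hA]
    have h3 : ∑ j ∈ D, (s ∘ σ) j ≤ ∑ i ∈ Finset.range k, padF (s ∘ σ) i :=
      sum_le_sorted hanti (fun j => hs0 (σ j)) hk (by rw [hDcard]; exact min_le_left k n)
    rw [h1, h2, ha]
    exact h3

lemma key_ineq {x y : ℝ} (hx : 0 < x) (hy : 0 ≤ y) :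
    x * Real.log x + (Real.log x + 1) * (y - x) ≤ y * Real.log y := by
  rcases eq_or_lt_of_le hy with h | hy'
  · rw [← h]; simp; nlinarith
  · have hlog : Real.log (x / y) ≤ x / y - 1 := Real.log_le_sub_one_of_pos (div_pos hx hy')
    rw [Real.log_div (ne_of_gt hx) (ne_of_gt hy')] at hlog
    have h2 := mul_le_mul_of_nonneg_left hlog (le_of_lt hy')
    have hyx : y * (x / y) = x := by field_simp
    nlinarith [h2]

lemma hlp {N : ℕ} {a b : ℕ → ℝ} (ha : Antitone a) (ha0 : ∀ i, 0 ≤ a i) (hb0 : ∀ i, 0 ≤ b i)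
    (haN : ∀ i, N ≤ i → a i = 0) (hbN : ∀ i, N ≤ i → b i = 0)
    (hsa : ∑ i ∈ Finset.range N, a i = 1) (hsb : ∑ i ∈ Finset.range N, b i = 1)
    (hk : ∀ k, k ≤ N → ∑ i ∈ Finset.range k, a i ≤ ∑ i ∈ Finset.range k, b i) :
    ∑ i ∈ Finset.range N, a i * Real.log (a i) ≤ ∑ i ∈ Finset.range N, b i * Real.log (b i) := by
  classical
  have hne : {k | a k = 0}.Nonempty := ⟨N, haN N le_rfl⟩
  set t := sInf {k | a k = 0} with htdef
  have hat : a t = 0 := Nat.sInf_mem hne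
  have htN : t ≤ N := Nat.sInf_le (haN N le_rfl)
  have hzero : ∀ i, t ≤ i → a i = 0 := fun i hi => le_antisymm (hat ▸ ha hi) (ha0 i)
  have hpos : ∀ i, i < t → 0 < a i := by
    intro i hi
    rcases (ha0 i).lt_or_eq with h | h
    · exact h
    · exact absurd (Nat.sInf_le (show a i = 0 from h.symm)) (not_le.mpr hi)
  have hsa' : ∑ i ∈ Finset.range t, a i = 1 := by
    rw [Finset.sum_subset (Finset.range_subset_range.mpr htN)
      (fun i _ hi => hzero i (by simpa using hi))]
    exact hsa
  have hsb' : ∑ i ∈ Finset.range t, b i = 1 := by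
    have h1 : (1:ℝ) ≤ ∑ i ∈ Finset.range t, b i := hsa' ▸ hk t htN
    have h2 : ∑ i ∈ Finset.range t, b i ≤ 1 := by
      rw [← hsb]
      exact Finset.sum_le_sum_of_subset_of_nonneg (Finset.range_subset_range.mpr htN)
        (fun i _ _ => hb0 i)
    linarith
  have hbz : ∀ i, t ≤ i → b i = 0 := by
    intro i hi
    rcases lt_or_ge i N with hiN | hiN
    · have hsd : ∑ j ∈ Finset.range N \ Finset.range t, b j = 0 := by
        rw [Finset.sum_sdiff_eq_sub (Finset.range_subset_range.mpr htN), hsb, hsb']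
        ring
      refine (Finset.sum_eq_zero_iff_of_nonneg (fun j _ => hb0 j)).mp hsd i ?_
      simp only [Finset.mem_sdiff, Finset.mem_range]
      omega
    · exact hbN i hiN
  have hra : ∑ i ∈ Finset.range N, a i * Real.log (a i)
      = ∑ i ∈ Finset.range t, a i * Real.log (a i) :=
    (Finset.sum_subset (Finset.range_subset_range.mpr htN)
      (fun i _ hi => by rw [hzero i (by simpa using hi)]; simp)).symm
  have hrb : ∑ i ∈ Finset.range N, b i * Real.log (b i)
      = ∑ i ∈ Finset.range t, b i * Real.log (b i) :=
    (Finset.sum_subset (Finset.range_subset_range.mpr htN)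
      (fun i _ hi => by rw [hbz i (by simpa using hi)]; simp)).symm
  rw [hra, hrb]
  have hline : ∀ i ∈ Finset.range t,
      a i * Real.log (a i) + (Real.log (a i) + 1) * (b i - a i) ≤ b i * Real.log (b i) :=
    fun i hi => key_ineq (hpos i (Finset.mem_range.mp hi)) (hb0 i)
  have hsumline := Finset.sum_le_sum hline
  rw [Finset.sum_add_distrib] at hsumline
  have habel : 0 ≤ ∑ i ∈ Finset.range t, (Real.log (a i) + 1) * (b i - a i) := by
    have hexp : ∀ i ∈ Finset.range t, (Real.log (a i) + 1) * (b i - a i)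
        = Real.log (a i) * (b i - a i) + (b i - a i) := fun i _ => by ring
    rw [Finset.sum_congr rfl hexp, Finset.sum_add_distrib]
    have h1 : ∑ i ∈ Finset.range t, (b i - a i) = 0 := by
      rw [Finset.sum_sub_distrib, hsa', hsb']; ring
    rw [h1, add_zero]
    have habel2 := Finset.sum_range_by_parts (fun i => Real.log (a i))
      (fun i => b i - a i) t
    simp only [smul_eq_mul] at habel2
    rw [habel2, h1, mul_zero, zero_sub, neg_nonneg]
    apply Finset.sum_nonpos
    intro i hi
    have hi' : i < t - 1 := Finset.mem_range.mp hi
    apply mul_nonpos_of_nonpos_of_nonneg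
    · have h01 : 0 < a (i + 1) := hpos _ (by omega)
      have h02 := ha (Nat.le_succ i)
      simp only [sub_nonpos]
      exact Real.log_le_log h01 h02
    · have h03 : ∑ j ∈ Finset.range (i + 1), a j ≤ ∑ j ∈ Finset.range (i + 1), b j :=
        hk (i + 1) (by omega)
      rw [Finset.sum_sub_distrib]
      linarith
  linarith

end SchurAux

/-- Schur concavity of the Shannon entropy: if probability vector `p`
is majorized by probability vector `q`, then `H(p) ≥ H(q)`. -/
theorem shannon_entropy_schur_concave {m n : ℕ}
    (p : Fin m → ℝ) (q : Fin n → ℝ)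
    (hp0 : ∀ i, 0 ≤ p i) (hp1 : (∑ i, p i) = 1)
    (hq0 : ∀ j, 0 ≤ q j) (hq1 : (∑ j, q j) = 1)
    (hmaj : MajorizedBy p q) :
    H2 q ≤ H2 p := by
  classical
  set N := max m n with hN
  obtain ⟨a, hAa, ha0, haN, hsuma, hparta⟩ := SchurAux.exists_good (le_max_left m n) p hp0
  obtain ⟨b, hAb, hb0, hbN, hsumb, hpartb⟩ := SchurAux.exists_good (le_max_right m n) q hq0
  have hsa : ∑ i ∈ Finset.range N, a i = 1 := by
    have := hsuma id rfl
    simpa [hp1] using this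
  have hsb : ∑ i ∈ Finset.range N, b i = 1 := by
    have := hsumb id rfl
    simpa [hq1] using this
  have hk : ∀ k, k ≤ N → ∑ i ∈ Finset.range k, a i ≤ ∑ i ∈ Finset.range k, b i := by
    intro k hkN
    rw [hparta k hkN, hpartb k hkN]
    exact hmaj.1 k
  have hmain := SchurAux.hlp hAa ha0 hb0 haN hbN hsa hsb hk
  have hga := hsuma (fun x => x * Real.log x) (by simp)
  have hgb := hsumb (fun x => x * Real.log x) (by simp)
  have hfinal : ∑ i, p i * Real.log (p i) ≤ ∑ j, q j * Real.log (q j) := by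
    rw [← hga, ← hgb]; exact hmain
  have hlog2 : (0:ℝ) < Real.log 2 := Real.log_pos one_lt_two
  have hinv : (0:ℝ) ≤ (Real.log 2)⁻¹ := le_of_lt (inv_pos.mpr hlog2)
  unfold H2
  have hrw : ∀ (x : ℝ), Real.logb 2 x = Real.log x * (Real.log 2)⁻¹ := by
    intro x; rw [Real.logb, div_eq_mul_inv]
  simp only [hrw]
  have h1 : ∑ j, q j * (Real.log (q j) * (Real.log 2)⁻¹)
      = (∑ j, q j * Real.log (q j)) * (Real.log 2)⁻¹ := by
    rw [Finset.sum_mul]; exact Finset.sum_congr rfl (fun j _ => by ring)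
  have h2 : ∑ i, p i * (Real.log (p i) * (Real.log 2)⁻¹)
      = (∑ i, p i * Real.log (p i)) * (Real.log 2)⁻¹ := by
    rw [Finset.sum_mul]; exact Finset.sum_congr rfl (fun i _ => by ring)
  rw [h1, h2]
  nlinarith [hfinal, hinv]
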